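/- arXiv:1409.2445 — 7 statements merged into one kernel-verified Lean document; each statement's English description precedes it below -/
import Mathlib

section
/- Let P be a finite poset. Then the poset T(P) of strictly order-reversing maps has a unique minimal element if and only if P is pure (all maximal chains of P have the same length). (This is the combinatorial content of Hibi's theorem that the Hibi ring R[L] of L = I(P) is Gorenstein if and only if P is pure, since minimal generators of the canonical module of R[L] correspond bijectively to minimal elements of T(P).) -/
open Classical

/-- `Hat P` is the poset `P` with a new least element `-∞ = ⊥` and a new
greatest element `∞ = ⊤` adjoined. -/
abbrev Hat (P : Type*) := WithBot (WithTop P)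

/-- The canonical inclusion of `P` into `Hat P`. -/
def toHat {P : Type*} (x : P) : Hat P := ((x : WithTop P) : WithBot (WithTop P))

/-- The rank of a poset: the maximal length (number of covering steps) of a
chain, encoded as the maximal `n` admitting a strictly increasing sequence of
`n + 1` elements. -/
noncomputable def rankN (Q : Type*) [Preorder Q] : ℕ :=
  sSup {n : ℕ | ∃ f : Fin (n + 1) → Q, StrictMono f}

/-- The height of `x` in a poset `Q`: the rank of the subposet `{y | y ≤ x}`. -/
noncomputable def heightN {Q : Type*} [Preorder Q] (x : Q) : ℕ :=
  sSup {n : ℕ | ∃ f : Fin (n + 1) → Q, StrictMono f ∧ ∀ i, f i ≤ x}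

/-- The depth of `x` in a poset `Q`: the rank of the subposet `{y | x ≤ y}`. -/
noncomputable def depthN {Q : Type*} [Preorder Q] (x : Q) : ℕ :=
  sSup {n : ℕ | ∃ f : Fin (n + 1) → Q, StrictMono f ∧ ∀ i, x ≤ f i}

/-- `v` belongs to `S(P)`: `v : Hat P → ℕ` is order-reversing with `v ∞ = 0`. -/
def memS (P : Type*) [PartialOrder P] (v : Hat P → ℕ) : Prop :=
  v ⊤ = 0 ∧ ∀ p q : Hat P, p ≤ q → v q ≤ v p

/-- `v` belongs to `T(P)`: `v : Hat P → ℕ` is strictly order-reversing with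
`v ∞ = 0`. -/
def memT (P : Type*) [PartialOrder P] (v : Hat P → ℕ) : Prop :=
  v ⊤ = 0 ∧ ∀ p q : Hat P, p < q → v q < v p

/-- The partial order of `T(P)`: `v ≥ w` iff `v` dominates `w` pointwise and the
pointwise difference `v - w` is order-reversing. -/
def Tge (P : Type*) [PartialOrder P] (v w : Hat P → ℕ) : Prop :=
  (∀ p : Hat P, w p ≤ v p) ∧ ∀ p q : Hat P, p ≤ q → v q - w q ≤ v p - w p

/-- `v` is a minimal element of the poset `T(P)`. -/
def IsMinT (P : Type*) [PartialOrder P] (v : Hat P → ℕ) : Prop :=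
  memT P v ∧ ∀ w : Hat P → ℕ, memT P w → Tge P v w → w = v

/-- A poset is pure if all its maximal chains have the same length, equivalently
the same cardinality. -/
def IsPure (P : Type*) [PartialOrder P] : Prop :=
  ∀ C D : Set P, IsMaxChain (· ≤ ·) C → IsMaxChain (· ≤ ·) D → C.ncard = D.ncard

/-!
Let `d` be the depth function of `Hat P` (the length of a longest chain from a point up to `∞`).
Every strictly order-reversing `v` satisfies `d ≤ v` pointwise, so `d` is a minimal element
of `T(P)`. On a maximal chain of `Hat P` the function `d` is injective with values in
`{0, …, d(-∞)}`, so `P` is pure iff every maximal chain takes all these values, iff `d` drops by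
exactly one along every cover `p ⋖ q` of `Hat P`.

If `d` drops by exactly one along covers, then `v - d` is order-reversing for every `v ∈ T(P)`
(it suffices to check covers), hence `v ≥ d` in `T(P)` and `d` is the only minimal element.
Conversely, if the minimal element is unique, descent gives `v ≥ d` for all `v ∈ T(P)`; a cover
`p ⋖ q` with `d p ≥ d q + 2` would yield an element `v` of `T(P)` with
`(v - d) q = 1 > 0 = (v - d) p`.
-/

open Set

section Depth

variable {α : Type*} [PartialOrder α]

noncomputable def depth (x : α) : ℕ := (Order.coheight x).toNat

@[simp] lemma depth_top [OrderTop α] : depth (⊤ : α) = 0 := by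
  simp [depth]

variable [Finite α]

lemma coheight_ne_top_of_finite (x : α) : Order.coheight x ≠ ⊤ := by
  have := Fintype.ofFinite α
  exact ne_top_of_le_ne_top (ENat.natCast_ne_top (Fintype.card α))
    (Order.coheight_le fun p _ => by exact_mod_cast p.length_lt_card.le)

lemma coe_depth (x : α) : (depth x : ℕ∞) = Order.coheight x :=
  ENat.natCast_toNat (coheight_ne_top_of_finite x)

lemma depth_strictAnti : StrictAnti (depth : α → ℕ) := fun a b hab => by
  have := Order.coheight_add_one_le hab
  rw [← coe_depth, ← coe_depth] at this
  exact_mod_cast this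

lemma depth_le_of_strictAnti {v : α → ℕ} (hv : StrictAnti v) (x : α) : depth x ≤ v x := by
  have := Order.coheight_le_coheight_apply_of_strictMono _ hv.dual_right x
  rw [← coe_depth, Function.comp_apply, Order.coheight_toDual, Order.height_nat] at this
  exact_mod_cast this

lemma depth_le_one_of_covBy_top [OrderTop α] {x : α} (h : x ⋖ ⊤) : depth x ≤ 1 := by
  have : Order.coheight x ≤ (1 : ℕ) := by
    refine Order.coheight_le_coe_iff.2 fun y hxy => ?_
    have hy : y = ⊤ := by
      by_contra hy
      exact h.2 hxy (lt_top_iff_ne_top.2 hy)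
    simp [hy]
  rw [← coe_depth] at this
  exact_mod_cast this

end Depth

section Chains

variable {α : Type*} [PartialOrder α] [Finite α] {M : Set α}

lemma IsChain.injOn_depth (hM : IsChain (· ≤ ·) M) : InjOn depth M := by
  intro x hx y hy hxy
  by_contra hne
  rcases hM hx hy hne with h | h
  · exact (depth_strictAnti (h.lt_of_ne hne)).ne' hxy
  · exact (depth_strictAnti (h.lt_of_ne' hne)).ne hxy

variable [BoundedOrder α]

lemma image_depth_subset_Iic (M : Set α) : depth '' M ⊆ Iic (depth (⊥ : α)) := by
  rintro _ ⟨x, -, rfl⟩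
  exact depth_strictAnti.antitone bot_le

lemma IsChain.ncard_le_depth_bot_add_one (hM : IsChain (· ≤ ·) M) :
    M.ncard ≤ depth (⊥ : α) + 1 := by
  rw [← hM.injOn_depth.ncard_image, ← ncard_Iic_nat]
  exact ncard_le_ncard (image_depth_subset_Iic M) (finite_Iic _)

lemma IsChain.image_depth_eq_Iic_iff (hM : IsChain (· ≤ ·) M) :
    depth '' M = Iic (depth (⊥ : α)) ↔ M.ncard = depth (⊥ : α) + 1 := by
  rw [← hM.injOn_depth.ncard_image]
  refine ⟨fun h => by rw [h, ncard_Iic_nat], fun h => ?_⟩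
  exact eq_of_subset_of_ncard_le (image_depth_subset_Iic M) (by rw [h, ncard_Iic_nat])
    (finite_Iic _)

lemma exists_isMaxChain_ncard_eq_depth_bot_add_one :
    ∃ M : Set α, IsMaxChain (· ≤ ·) M ∧ M.ncard = depth (⊥ : α) + 1 := by
  obtain ⟨s, -, hs⟩ := Order.exists_series_of_coheight_eq_coe (⊥ : α) (coe_depth ⊥).symm
  obtain ⟨M, hM, hsM⟩ := s.strictMono.monotone.isChain_range.exists_maxChain
  refine ⟨M, hM, hM.1.ncard_le_depth_bot_add_one.antisymm ?_⟩
  calc depth (⊥ : α) + 1 = (range s).ncard := by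
        rw [ncard_range_of_injective s.strictMono.injective, Nat.card_fin, hs]
    _ ≤ M.ncard := ncard_le_ncard hsM

lemma isPure_iff_forall_isMaxChain_ncard :
    IsPure α ↔ ∀ M : Set α, IsMaxChain (· ≤ ·) M → M.ncard = depth (⊥ : α) + 1 := by
  refine ⟨fun h M hM => ?_, fun h C D hC hD => (h C hC).trans (h D hD).symm⟩
  obtain ⟨M₀, hM₀, hM₀card⟩ := exists_isMaxChain_ncard_eq_depth_bot_add_one (α := α)
  exact (h M M₀ hM hM₀).trans hM₀card

lemma IsMaxChain.exists_covBy_mem (hM : IsMaxChain (· ≤ ·) M) {x : α} (hx : x ∈ M)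
    (hxt : x ≠ ⊤) : ∃ y ∈ M, x ⋖ y := by
  obtain ⟨y, ⟨hyM, hxy⟩, hymin⟩ :=
    (toFinite {z ∈ M | x < z}).exists_minimal ⟨⊤, hM.top_mem, hxt.lt_top⟩
  have hleast : ∀ z ∈ M, x < z → y ≤ z := fun z hz hxz =>
    (hM.1.total hyM hz).elim id fun hzy => hymin ⟨hz, hxz⟩ hzy
  refine ⟨y, hyM, hxy, fun z hxz hzy => hzy.not_ge (hleast z ?_ hxz)⟩
  have hchain : IsChain (· ≤ ·) (insert z M) := hM.1.insert fun m hm _ => by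
    rcases hM.1.total hm hx with hmx | hxm
    · exact Or.inr (hmx.trans hxz.le)
    · rcases hxm.lt_or_eq with hxm | rfl
      · exact Or.inl (hzy.le.trans (hleast m hm hxm))
      · exact Or.inr hxz.le
  rw [hM.2 hchain (subset_insert z M)]
  exact mem_insert z M

lemma IsMaxChain.image_depth_eq_Iic (hgr : ∀ p q : α, p ⋖ q → depth p = depth q + 1)
    (hM : IsMaxChain (· ≤ ·) M) : depth '' M = Iic (depth (⊥ : α)) := by
  refine (image_depth_subset_Iic M).antisymm fun k (hk : k ≤ depth ⊥) => ?_
  obtain ⟨n, hn⟩ := Nat.exists_eq_add_of_le hk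
  induction n generalizing k with
  | zero => exact ⟨⊥, hM.bot_mem, hn⟩
  | succ n ih =>
    obtain ⟨x, hx, hxk⟩ := ih (k + 1) (by omega) (by omega)
    have hxt : x ≠ ⊤ := by rintro rfl; simp at hxk
    obtain ⟨y, hy, hxy⟩ := hM.exists_covBy_mem hx hxt
    exact ⟨y, hy, by have := hgr x y hxy; omega⟩

lemma IsChain.depth_eq_add_one_of_covBy (hM : IsChain (· ≤ ·) M)
    (hfull : Iic (depth (⊥ : α)) ⊆ depth '' M) {p q : α} (hp : p ∈ M) (hq : q ∈ M)
    (hpq : p ⋖ q) : depth p = depth q + 1 := by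
  have hlt := depth_strictAnti hpq.lt
  obtain ⟨m, hm, hdm⟩ := hfull (show depth q + 1 ≤ depth ⊥ from
    hlt.trans_le (depth_strictAnti.antitone bot_le))
  have hmq : m < q := by
    rcases hM.total hm hq with h | h
    · exact h.lt_of_ne (by rintro rfl; omega)
    · have := depth_strictAnti.antitone h; omega
  have hmp : m ≤ p := by
    rcases hM.total hm hp with h | h
    · exact h
    · exact h.eq_or_lt.elim (fun h => h.ge) fun h => absurd hmq (hpq.2 h)
  have := depth_strictAnti.antitone hmp
  omega

theorem isPure_iff_forall_covBy_depth :
    IsPure α ↔ ∀ p q : α, p ⋖ q → depth p = depth q + 1 := by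
  rw [isPure_iff_forall_isMaxChain_ncard]
  refine ⟨fun h p q hpq => ?_,
    fun hgr M hM => hM.1.image_depth_eq_Iic_iff.1 (hM.image_depth_eq_Iic hgr)⟩
  obtain ⟨M, hM, hpqM⟩ := (IsChain.pair hpq.le).exists_maxChain
  exact hM.1.depth_eq_add_one_of_covBy (hM.1.image_depth_eq_Iic_iff.2 (h M hM)).ge
    (hpqM (mem_insert p _)) (hpqM (mem_insert_of_mem p rfl)) hpq

end Chains

section StrictAnti

variable {α : Type*} [PartialOrder α] [Finite α]

lemma antitone_sub_depth (hgr : ∀ p q : α, p ⋖ q → depth p = depth q + 1) {v : α → ℕ}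
    (hv : StrictAnti v) : Antitone (v - depth) := by
  have := Fintype.ofFinite α
  have := Fintype.toLocallyFiniteOrder (α := α)
  refine (antitone_iff_forall_covBy _).2 fun p q hpq => ?_
  have := hgr p q hpq
  have := hv hpq.lt
  have := depth_le_of_strictAnti hv q
  simp only [Pi.sub_apply]
  omega

variable [OrderTop α]

/-- The witness is the pointwise maximum of `depth` and `x ↦ depth q + 1 + (depth of x in Iic q)`,
the latter taken only for `x ≤ q`. -/
lemma exists_strictAnti_of_covBy {p q : α} (hpq : p ⋖ q) (hq : q ≠ ⊤) :
    ∃ u : α → ℕ, u ⊤ = 0 ∧ StrictAnti u ∧ u q = depth q + 1 ∧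
      u p ≤ max (depth p) (depth q + 2) := by
  let k : α → ℕ := fun x => if hx : x ≤ q then depth q + 1 + depth (⟨x, hx⟩ : Iic q) else 0
  have hk : ∀ {x y}, x < y → y ≤ q → k y < k x := fun {x y} hxy hy => by
    simp only [k, dif_pos hy, dif_pos (hxy.le.trans hy)]
    have := depth_strictAnti (show (⟨x, hxy.le.trans hy⟩ : Iic q) < ⟨y, hy⟩ from hxy)
    omega
  refine ⟨fun x => max (depth x) (k x), ?_, fun x y hxy => ?_, ?_, ?_⟩
  · simp [k, hq]
  · refine max_lt (depth_strictAnti hxy |>.trans_le (le_max_left _ _)) ?_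
    by_cases hy : y ≤ q
    · exact (hk hxy hy).trans_le (le_max_right _ _)
    · simp only [k, dif_neg hy]
      exact (Nat.zero_le _).trans_lt (depth_strictAnti hxy) |>.trans_le (le_max_left _ _)
  · have : depth (⟨q, le_rfl⟩ : Iic q) = 0 := depth_top
    simp [k, this]
  · have hp : depth (⟨p, hpq.le⟩ : Iic q) ≤ 1 :=
      depth_le_one_of_covBy_top ((OrdConnected.apply_covBy_apply_iff
        (OrderEmbedding.subtype _) (by simp; exact ordConnected_Iic)).1 hpq)
    simp only [k, dif_pos hpq.le]
    omega

lemma depth_eq_add_one_of_forall_antitone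
    (h : ∀ u : α → ℕ, u ⊤ = 0 → StrictAnti u → Antitone (u - depth)) {p q : α}
    (hpq : p ⋖ q) : depth p = depth q + 1 := by
  have hlt := depth_strictAnti hpq.lt
  rcases eq_or_ne q ⊤ with rfl | hq
  · have := depth_le_one_of_covBy_top hpq
    simp only [depth_top] at hlt ⊢
    omega
  obtain ⟨u, hu0, hu, huq, hup⟩ := exists_strictAnti_of_covBy hpq hq
  have := h u hu0 hu hpq.le
  simp only [Pi.sub_apply] at this
  omega

end StrictAnti

section Hat

variable {P : Type*}

lemma toHat_injective : Function.Injective (toHat : P → Hat P) := fun x y h => by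
  simpa [toHat] using h

def adjoinBotTop (C : Set P) : Set (Hat P) := insert ⊥ (insert ⊤ (toHat '' C))

lemma preimage_adjoinBotTop (C : Set P) : toHat ⁻¹' adjoinBotTop C = C := by
  ext x
  simp [adjoinBotTop, toHat]

lemma subset_adjoinBotTop_preimage (M : Set (Hat P)) : M ⊆ adjoinBotTop (toHat ⁻¹' M) := by
  intro z hz
  induction z using WithBot.recBotCoe with
  | bot => exact mem_insert _ _
  | coe w =>
    induction w using WithTop.recTopCoe with
    | top => exact mem_insert_of_mem _ (mem_insert _ _)
    | coe x => exact mem_insert_of_mem _ (mem_insert_of_mem _ ⟨x, hz, rfl⟩)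

lemma adjoinBotTop_mono {C D : Set P} (h : C ⊆ D) : adjoinBotTop C ⊆ adjoinBotTop D :=
  insert_subset_insert (insert_subset_insert (image_mono h))

variable [PartialOrder P]

lemma toHat_le_toHat {x y : P} : toHat x ≤ toHat y ↔ x ≤ y := by
  simp [toHat]

lemma IsChain.preimage_toHat {M : Set (Hat P)} (hM : IsChain (· ≤ ·) M) :
    IsChain (· ≤ ·) (toHat ⁻¹' M) :=
  hM.preimage _ _ _ toHat_injective fun _ _ => toHat_le_toHat.1

lemma IsChain.adjoinBotTop {C : Set P} (hC : IsChain (· ≤ ·) C) :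
    IsChain (· ≤ ·) (adjoinBotTop C) :=
  ((hC.image_of_map_rel _ _ toHat fun _ _ => toHat_le_toHat.2).insert
    fun _ _ _ => Or.inr le_top).insert fun _ _ _ => Or.inl bot_le

lemma IsMaxChain.adjoinBotTop_preimage {M : Set (Hat P)} (hM : IsMaxChain (· ≤ ·) M) :
    adjoinBotTop (toHat ⁻¹' M) = M :=
  (hM.2 hM.1.preimage_toHat.adjoinBotTop (subset_adjoinBotTop_preimage M)).symm

lemma isMaxChain_adjoinBotTop_iff {C : Set P} :
    IsMaxChain (· ≤ ·) (adjoinBotTop C) ↔ IsMaxChain (· ≤ ·) C := by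
  refine ⟨fun h => ⟨?_, fun D hD hCD => ?_⟩, fun h => ⟨h.1.adjoinBotTop, fun M hM hCM => ?_⟩⟩
  · simpa [preimage_adjoinBotTop] using h.1.preimage_toHat
  · rw [← preimage_adjoinBotTop C, ← preimage_adjoinBotTop D,
      h.2 hD.adjoinBotTop (adjoinBotTop_mono hCD)]
  · have : C = toHat ⁻¹' M := h.2 hM.preimage_toHat (by
      simpa [preimage_adjoinBotTop] using preimage_mono (f := toHat) hCM)
    exact hCM.antisymm (this ▸ subset_adjoinBotTop_preimage M)

lemma ncard_adjoinBotTop [Finite P] (C : Set P) : (adjoinBotTop C).ncard = C.ncard + 2 := by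
  have hbot : (⊥ : Hat P) ∉ insert ⊤ (toHat '' C) := by simp [toHat]
  have htop : (⊤ : Hat P) ∉ toHat '' C := by simp [toHat]
  rw [adjoinBotTop, ncard_insert_of_notMem hbot, ncard_insert_of_notMem htop,
    ncard_image_of_injective _ toHat_injective]

theorem isPure_hat_iff [Finite P] : IsPure (Hat P) ↔ IsPure P := by
  refine ⟨fun h C D hC hD => ?_, fun h M N hM hN => ?_⟩
  · have := h _ _ (isMaxChain_adjoinBotTop_iff.2 hC) (isMaxChain_adjoinBotTop_iff.2 hD)
    rwa [ncard_adjoinBotTop, ncard_adjoinBotTop, Nat.add_right_cancel_iff] at this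
  · rw [← hM.adjoinBotTop_preimage, ← hN.adjoinBotTop_preimage] at *
    rw [ncard_adjoinBotTop, ncard_adjoinBotTop,
      h _ _ (isMaxChain_adjoinBotTop_iff.1 hM) (isMaxChain_adjoinBotTop_iff.1 hN)]

end Hat

section T

variable {P : Type*} [PartialOrder P]

lemma tge_trans {u v w : Hat P → ℕ} (huv : Tge P u v) (hvw : Tge P v w) : Tge P u w := by
  refine ⟨fun p => (hvw.1 p).trans (huv.1 p), fun p q hpq => ?_⟩
  have := huv.2 p q hpq
  have := hvw.2 p q hpq
  have := huv.1 p
  have := huv.1 q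
  have := hvw.1 p
  have := hvw.1 q
  omega

variable [Finite P]

lemma memT_depth : memT P depth := ⟨depth_top, depth_strictAnti⟩

lemma isMinT_depth : IsMinT P depth :=
  ⟨memT_depth, fun _ hw hw' => le_antisymm hw'.1 (depth_le_of_strictAnti hw.2)⟩

/-- `Tge` only decreases functions pointwise, so descent in `T(P)` terminates. -/
lemma exists_isMinT_tge {v : Hat P → ℕ} (hv : memT P v) : ∃ m, IsMinT P m ∧ Tge P v m := by
  obtain ⟨m, ⟨hm, hvm⟩, hmin⟩ := wellFounded_lt.has_min {w | memT P w ∧ Tge P v w}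
    ⟨v, hv, fun _ => le_rfl, fun _ _ _ => by simp⟩
  refine ⟨m, ⟨hm, fun w hw hmw => ?_⟩, hvm⟩
  exact (show w ≤ m from hmw.1).eq_of_not_lt (hmin w ⟨hw, tge_trans hvm hmw⟩)

lemma tge_depth_of_existsUnique (h : ∃! v, IsMinT P v) {u : Hat P → ℕ} (hu : memT P u) :
    Tge P u depth := by
  obtain ⟨m, hm, hum⟩ := exists_isMinT_tge hu
  rwa [h.unique hm isMinT_depth] at hum

end T

/-- **Hibi's Gorenstein criterion (combinatorial form).**
For a finite poset `P`, the poset `T(P)` of strictly order-reversing maps has a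
unique minimal element if and only if `P` is pure. -/
theorem uniqueMinT_iff_isPure (P : Type*) [Fintype P] [PartialOrder P] :
    (∃! v : Hat P → ℕ, IsMinT P v) ↔ IsPure P := by
  rw [← isPure_hat_iff, isPure_iff_forall_covBy_depth]
  refine ⟨fun h p q => depth_eq_add_one_of_forall_antitone
    fun u hu0 hu => (tge_depth_of_existsUnique h ⟨hu0, hu⟩).2, fun hgr => ?_⟩
  refine ⟨depth, isMinT_depth, fun v hv => ?_⟩
  exact (hv.2 depth memT_depth ⟨depth_le_of_strictAnti hv.1.2, antitone_sub_depth hgr hv.1.2⟩).symm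
end

section
/- Let P be a finite poset. Then the function depth : \hat{P} \to \mathbb{N} belongs to T(P), and the minimum of v(-\infty) over all v \in T(P) equals rank P + 2. (This is the combinatorial core of the formula reg R[L] = |P| - rank P - 1 for the Castelnuovo-Mumford regularity of the Hibi ring of L = I(P), since reg R[L] = dim R[L] - min{v(-\infty) : v \in T(P)} and dim R[L] = |P| + 1.) -/
open Classical

/-! `depthN` and `rankN` are Mathlib's `Order.coheight` and `Order.krullDim` in disguise: a chain
of `n + 1` elements is an `LTSeries` of length `n`. Adjoining a bottom and a top element raises the
Krull dimension by one each, so `depth(-∞) = coheight ⊥ = krullDim P̂ = rank P + 2`. A strictly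
order-reversing `v : Q → ℕ` drops by at least one along every step of a chain, so
`coheight x ≤ v x`; this is the lower bound, and depth attains it. -/

open Order

section ChainLengths

variable {α : Type*} [Preorder α]

lemma bddAbove_strictMono_lengths [Finite α] :
    BddAbove {n : ℕ | ∃ f : Fin (n + 1) → α, StrictMono f} := by
  refine ⟨Nat.card α, fun n ⟨f, hf⟩ => ?_⟩
  exact Nat.le_of_succ_le (by simpa using Nat.card_le_card_of_injective f hf.injective)

lemma natCast_depthN_eq_coheight [Finite α] (x : α) : (depthN x : ℕ∞) = coheight x := by
  have hbdd : BddAbove {n : ℕ | ∃ f : Fin (n + 1) → α, StrictMono f ∧ ∀ i, x ≤ f i} :=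
    bddAbove_strictMono_lengths.mono <| by rintro _ ⟨f, hf, -⟩; exact ⟨f, hf⟩
  rw [depthN, ENat.natCast_sSup hbdd, coheight_eq]
  refine le_antisymm (iSup₂_le fun n ⟨f, hf, hx⟩ => ?_) (iSup₂_le fun p hp => ?_)
  · exact le_iSup₂_of_le (LTSeries.mk n f hf) (hx 0) le_rfl
  · exact le_iSup₂_of_le p.length
      ⟨p, p.strictMono, fun i => hp.trans (p.monotone (Fin.zero_le i))⟩ le_rfl

lemma natCast_rankN_eq_krullDim [Finite α] [Nonempty α] :
    (rankN α : WithBot ℕ∞) = krullDim α := by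
  suffices (rankN α : ℕ∞) = ⨆ p : LTSeries α, (p.length : ℕ∞) by
    rw [krullDim_eq_iSup_length, ← this]
    rfl
  rw [rankN, ENat.natCast_sSup bddAbove_strictMono_lengths]
  refine le_antisymm (iSup₂_le fun n ⟨f, hf⟩ => ?_) (iSup_le fun p => ?_)
  · exact le_iSup_of_le (LTSeries.mk n f hf) le_rfl
  · exact le_iSup₂_of_le p.length ⟨p, p.strictMono⟩ le_rfl

lemma depthN_strictAnti [Finite α] : StrictAnti (depthN : α → ℕ) := fun x y hxy => by
  have hy : coheight y < ⊤ := by simp [← natCast_depthN_eq_coheight]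
  have h := coheight_strictAnti hxy hy
  rw [← natCast_depthN_eq_coheight, ← natCast_depthN_eq_coheight] at h
  exact_mod_cast h

lemma depthN_top [OrderTop α] [Finite α] : depthN (⊤ : α) = 0 := by
  have h := natCast_depthN_eq_coheight (⊤ : α)
  rw [coheight_eq_zero.mpr isMax_top] at h
  exact_mod_cast h

lemma coheight_le_of_strictAnti {v : α → ℕ} (hv : StrictAnti v) (x : α) : coheight x ≤ v x := by
  simpa using coheight_le_coheight_apply_of_strictMono (β := ℕᵒᵈ) _ hv.dual_right x

lemma depthN_le_of_strictAnti [Finite α] {v : α → ℕ} (hv : StrictAnti v) (x : α) :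
    depthN x ≤ v x := by
  have h := coheight_le_of_strictAnti hv x
  rw [← natCast_depthN_eq_coheight] at h
  exact_mod_cast h

end ChainLengths

lemma depthN_bot_hat (P : Type*) [Finite P] [PartialOrder P] [Nonempty P] :
    depthN (⊥ : Hat P) = rankN P + 2 := by
  have h := natCast_depthN_eq_coheight (⊥ : Hat P)
  rw [← WithBot.coe_inj, coheight_bot_eq_krullDim, krullDim_withBot, krullDim_WithTop,
    ← natCast_rankN_eq_krullDim] at h
  exact_mod_cast h

/-- The depth function belongs to `T(P)`, and the minimum of `v(-∞)` over all
`v ∈ T(P)` equals `rank P + 2` (the combinatorial core of the regularity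
formula `reg R[L] = |P| - rank P - 1` for Hibi rings). -/
theorem isLeast_min_value_at_bot (P : Type*) [Fintype P] [PartialOrder P]
    [Nonempty P] :
    memT P (fun x => depthN x) ∧
      IsLeast {n : ℕ | ∃ v : Hat P → ℕ, memT P v ∧ v ⊥ = n} (rankN P + 2) := by
  have hdepth : memT P (fun x => depthN x) := ⟨depthN_top, fun _ _ h => depthN_strictAnti h⟩
  refine ⟨hdepth, ⟨fun x => depthN x, hdepth, depthN_bot_hat P⟩, ?_⟩
  rintro n ⟨v, hv, rfl⟩
  exact depthN_bot_hat P ▸ depthN_le_of_strictAnti hv.2 ⊥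
end

section
/- Let P be a finite poset admitting a canonical chain decomposition (P is the disjoint union of chains C_1, ..., C_d, each of which is a maximal chain of P), and suppose I(P) is regular hyper-planar. Then for every canonical chain decomposition C_1 \cup ... \cup C_d of P, every index i, and every x \in C_i, one has height_{C_i}(x) = height_P(x), where height_P(x) is the maximum length of a chain in P with greatest element x. -/
open Classical

/-- The height of `x` inside a chain `C`: the number of elements of `C`
strictly below `x`. -/
noncomputable def heightC {P : Type*} [PartialOrder P] (C : Set P) (x : P) : ℕ :=
  {z ∈ C | z < x}.ncard

/-- A canonical chain decomposition of `P`: a partition of `P` into chains,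
each of which is a maximal chain of `P`. -/
def IsCCD {P : Type*} [PartialOrder P] {d : ℕ} (C : Fin d → Set P) : Prop :=
  (∀ i, IsMaxChain (· ≤ ·) (C i)) ∧
  (∀ i j, i ≠ j → Disjoint (C i) (C j)) ∧
  (⋃ i, C i) = Set.univ

/-- The lattice of lower sets of `P` is regular hyper-planar: `P` admits a
canonical chain decomposition and, for every canonical chain decomposition and
all `x < y` with `x ∈ Cᵢ`, `y ∈ Cⱼ`, one has `height_{Cᵢ}(x) < height_{Cⱼ}(y)`. -/
def RegularHP (P : Type*) [PartialOrder P] : Prop :=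
  (∃ (d : ℕ) (C : Fin d → Set P), IsCCD C) ∧
  ∀ (d : ℕ) (C : Fin d → Set P), IsCCD C →
    ∀ (i j : Fin d) (x y : P), x ∈ C i → y ∈ C j → x < y →
      heightC (C i) x < heightC (C j) y

/-- The lattice of lower sets of `P` is regular planar: `P` admits a canonical
chain decomposition into two chains and the regularity condition holds for all
such decompositions. -/
def RegularPlanar (P : Type*) [PartialOrder P] : Prop :=
  (∃ C : Fin 2 → Set P, IsCCD C) ∧
  ∀ C : Fin 2 → Set P, IsCCD C →
    ∀ (i j : Fin 2) (x y : P), x ∈ C i → y ∈ C j → x < y →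
      heightC (C i) x < heightC (C j) y

/-!
Both heights are compared with `Order.height`. Stepping down a chain `C` through the largest
element of `C` below `x` shows `heightC C x ≤ height x`. Conversely, regularity says precisely
that `y ↦ heightC (C j) y`, where `C j` is the chain containing `y`, is a strictly monotone map
`P → ℕ`, and `height` is bounded by any strictly monotone map into `ℕ`.
-/

section Height

variable {P : Type*} [PartialOrder P]

lemma nonempty_heightN_set (x : P) :
    {n : ℕ | ∃ f : Fin (n + 1) → P, StrictMono f ∧ ∀ i, f i ≤ x}.Nonempty :=
  ⟨0, fun _ : Fin 1 => x, Fin.strictMono_iff_lt_succ.2 fun i => i.elim0, fun _ => le_rfl⟩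

variable [Finite P]

lemma bddAbove_heightN_set (x : P) :
    BddAbove {n : ℕ | ∃ f : Fin (n + 1) → P, StrictMono f ∧ ∀ i, f i ≤ x} := by
  refine ⟨Nat.card P, fun n ⟨f, hf, _⟩ => ?_⟩
  exact (by simpa using Nat.card_le_card_of_injective f hf.injective : n < Nat.card P).le

lemma coe_heightN_eq_height (x : P) : (heightN x : ℕ∞) = Order.height x := by
  apply le_antisymm
  · obtain ⟨f, hf, hfx⟩ := Nat.sSup_mem (nonempty_heightN_set x) (bddAbove_heightN_set x)
    exact Order.length_le_height (p := LTSeries.mk _ f hf) (hfx _)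
  · refine Order.height_le fun p hp => ?_
    exact_mod_cast le_csSup (bddAbove_heightN_set x)
      ⟨p, p.strictMono, fun i => hp ▸ p.monotone (Fin.le_last i)⟩

lemma heightC_eq_heightC_add_one_of_maximal {C : Set P} (hC : IsChain (· ≤ ·) C) {x z : P}
    (hz : Maximal (· ∈ {w ∈ C | w < x}) z) : heightC C x = heightC C z + 1 := by
  have hbelow : {w ∈ C | w < z} = {w ∈ C | w < x} \ {z} := by
    ext w
    simp only [Set.mem_sdiff, Set.mem_ofPred_eq, Set.mem_singleton_iff]
    refine ⟨fun ⟨hwC, hwz⟩ => ⟨⟨hwC, hwz.trans hz.1.2⟩, hwz.ne⟩, fun ⟨⟨hwC, hwx⟩, hwz⟩ => ⟨hwC, ?_⟩⟩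
    refine ((hC.total hwC hz.1.1).resolve_right fun hzw => hwz ?_).lt_of_ne hwz
    exact hz.eq_of_ge ⟨hwC, hwx⟩ hzw
  rw [heightC, heightC, hbelow, Set.ncard_sdiff_singleton_add_one hz.1]

lemma heightC_le_height {C : Set P} (hC : IsChain (· ≤ ·) C) (x : P) :
    (heightC C x : ℕ∞) ≤ Order.height x := by
  induction x using WellFoundedLT.induction with
  | ind x ih =>
    rcases Set.eq_empty_or_nonempty {w ∈ C | w < x} with hempty | hne
    · simp [heightC, hempty]
    obtain ⟨z, hz⟩ := (Set.toFinite _).exists_maximal hne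
    rw [heightC_eq_heightC_add_one_of_maximal hC hz, Nat.cast_add_one]
    exact (add_le_add_left (ih z hz.1.2) 1).trans (Order.height_add_one_le hz.1.2)

end Height

namespace IsCCD

variable {P : Type*} [PartialOrder P] {d : ℕ} {C : Fin d → Set P}

lemma exists_mem (hC : IsCCD C) (x : P) : ∃ i, x ∈ C i :=
  Set.mem_iUnion.mp (hC.2.2 ▸ Set.mem_univ x)

lemma eq_of_mem (hC : IsCCD C) {x : P} {i j : Fin d} (hi : x ∈ C i) (hj : x ∈ C j) : i = j := by
  by_contra hij
  exact Set.disjoint_left.mp (hC.2.1 i j hij) hi hj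

end IsCCD

lemma RegularHP.height_le_heightC {P : Type*} [PartialOrder P] (hreg : RegularHP P) {d : ℕ}
    {C : Fin d → Set P} (hC : IsCCD C) {i : Fin d} {x : P} (hx : x ∈ C i) :
    Order.height x ≤ heightC (C i) x := by
  choose j hj using hC.exists_mem
  have hmono : StrictMono fun y => heightC (C (j y)) y :=
    fun y z hyz => hreg.2 d C hC _ _ y z (hj y) (hj z) hyz
  rw [← hC.eq_of_mem (hj x) hx, ← Order.height_nat (heightC _ x)]
  exact Order.height_le_height_apply_of_strictMono _ hmono x

/-- If `I(P)` is regular hyper-planar, then for every canonical chain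
decomposition `C₁ ∪ … ∪ C_d` of `P`, every index `i` and every `x ∈ Cᵢ`,
the height of `x` inside the chain `Cᵢ` equals the height of `x` in `P`. -/
theorem heightC_eq_heightN_of_regular (P : Type*) [Fintype P] [PartialOrder P]
    (hreg : RegularHP P) :
    ∀ (d : ℕ) (C : Fin d → Set P), IsCCD C → ∀ i : Fin d, ∀ x ∈ C i,
      heightC (C i) x = heightN x := by
  intro d C hC i x hx
  rw [← ENat.natCast_inj, coe_heightN_eq_height]
  exact le_antisymm (heightC_le_height (hC.1 i).1 x) (hreg.height_le_heightC hC hx)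
end

section
/- Let P be a finite poset such that I(P) is a regular planar lattice, with canonical chain decomposition P = C_1 \cup C_2 into two chains, where \ell(C_1) = rank P. Suppose height(x) + depth(y) \le rank \hat{P} + 1 for all x, y \in P with x covering y. Then every minimal element v of the poset T(P) satisfies v(max(C_1)) = 1, where max(C_1) is the greatest element of the chain C_1. -/
open Classical

/-!
Suppose `v (max (C 0)) ≥ 2` and write `l = |C 1|`, `h` for heights inside `C 1`. Since `v` is
strictly decreasing along chains, `v y + h y ≥ l` for `y ∈ C 1`; let `S` consist of `∞` and the
points of `C 1` where this is an equality. Lowering `v` by one outside `S` gives a smaller element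
of `T(P)`, contradicting minimality, as soon as `S` is an up-set and `v` drops by at least two
across its boundary. Below `S`, points of `C 0` are handled by regularity and points of `C 1` by
strictness of the bound. The up-set property needs the bound to be strict at every `z ∈ C 1`
below `max (C 0)`: at the covering pair `y ⋖ x` where `C 1` leaves the down-set of `max (C 0)`,
with `x ∈ C 0`, the hypothesis `height x + depth y ≤ rank P̂ + 1` forces `v y + h y > l`, and this
propagates down `C 1`.
-/

open Set

section Hat

variable {P : Type*}

@[simp]
lemma toHat_le_toHat_s11 [Preorder P] {a b : P} : toHat a ≤ toHat b ↔ a ≤ b := by simp [toHat]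

@[simp]
lemma toHat_lt_toHat [Preorder P] {a b : P} : toHat a < toHat b ↔ a < b := by simp [toHat]

lemma toHat_strictMono [Preorder P] : StrictMono (toHat : P → Hat P) :=
  fun _ _ => toHat_lt_toHat.2

lemma toHat_lt_top [Preorder P] (a : P) : toHat a < ⊤ :=
  WithBot.coe_lt_coe.2 (WithTop.coe_lt_top a)

lemma bot_lt_toHat [Preorder P] (a : P) : ⊥ < toHat a := WithBot.bot_lt_coe _

lemma bot_notMem_image_toHat [Preorder P] (s : Set P) : ⊥ ∉ toHat '' s :=
  fun ⟨_, _, h⟩ => (bot_lt_toHat _).ne' h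

lemma top_notMem_image_toHat [Preorder P] (s : Set P) : ⊤ ∉ toHat '' s :=
  fun ⟨_, _, h⟩ => (toHat_lt_top _).ne h

@[elab_as_elim]
lemma Hat.induction {motive : Hat P → Prop} (bot : motive ⊥) (top : motive ⊤)
    (coe : ∀ x, motive (toHat x)) (p : Hat P) : motive p := by
  induction p using WithBot.recBotCoe with
  | bot => exact bot
  | coe q =>
    induction q using WithTop.recTopCoe with
    | top => exact top
    | coe x => exact coe x

end Hat

section Chain

variable {α : Type*} [PartialOrder α] {s C : Set α} {u : α → ℕ} {a b : α}

lemma IsChain.exists_strictMono_fin (hs : IsChain (· ≤ ·) s) (hfin : s.Finite) {n : ℕ}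
    (hn : s.ncard = n) : ∃ f : Fin n → α, StrictMono f ∧ ∀ i, f i ∈ s := by
  let _ : LinearOrder s := hs.linearOrder
  have := hfin.fintype
  let e := Fintype.orderIsoFinOfCardEq s
    (by rw [← Nat.card_eq_fintype_card, Nat.card_coe_set_eq, hn])
  exact ⟨fun i => e i, fun i j hij => e.strictMono hij, fun i => (e i).2⟩

lemma StrictAnti.injOn_of_isChain (hu : StrictAnti u) (hs : IsChain (· ≤ ·) s) : InjOn u s := by
  intro x hx y hy hxy
  by_contra hne
  rcases hs hx hy hne with h | h
  · exact (hu (h.lt_of_ne hne)).ne' hxy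
  · exact (hu (h.lt_of_ne (Ne.symm hne))).ne hxy

lemma StrictAnti.ncard_le_of_isChain (hu : StrictAnti u) (hs : IsChain (· ≤ ·) s) {t : Set ℕ}
    (ht : t.Finite) (hst : MapsTo u s t) : s.ncard ≤ t.ncard :=
  ncard_le_ncard_of_injOn u hst (hu.injOn_of_isChain hs) ht

lemma heightC_eq_ncard_inter_Iio (C : Set α) (a : α) : heightC C a = (C ∩ Iio a).ncard := rfl

lemma StrictAnti.add_heightC_lt (hu : StrictAnti u) (hC : IsChain (· ≤ ·) C) (hb : b ∈ C)
    {d : ℕ} (hd : ∀ x ∈ C, u x < d) : u b + heightC C b < d := by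
  have hdown : (C ∩ Iio b).ncard ≤ (Ioo (u b) d).ncard :=
    hu.ncard_le_of_isChain (hC.mono inter_subset_left) (finite_Ioo _ _)
      fun x hx => ⟨hu hx.2, hd x hx.1⟩
  rw [ncard_Ioo_nat, ← heightC_eq_ncard_inter_Iio] at hdown
  have := hd b hb
  omega

variable [Finite α]

lemma heightC_add_ncard_sdiff_Iio (C : Set α) (a : α) :
    heightC C a + (C \ Iio a).ncard = C.ncard :=
  ncard_inter_add_ncard_sdiff_eq_ncard C (Iio a)

lemma heightC_lt_ncard (ha : a ∈ C) : heightC C a < C.ncard :=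
  ncard_lt_ncard ⟨inter_subset_left, fun h => (h ha).2.false⟩

lemma heightC_lt_heightC (ha : a ∈ C) (hab : a < b) : heightC C a < heightC C b :=
  ncard_lt_ncard ⟨fun x hx => ⟨hx.1, hx.2.trans hab⟩, fun h => (h ⟨ha, hab⟩).2.false⟩

lemma IsGreatest.heightC_add_one (hm : IsGreatest C a) : heightC C a + 1 = C.ncard := by
  have : C ∩ Iio a = C \ {a} := by
    ext x
    exact and_congr_right fun hx => (hm.2 hx).lt_iff_ne
  rw [heightC_eq_ncard_inter_Iio, this, ncard_sdiff_singleton_add_one hm.1]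

lemma StrictAnti.add_heightC_le_add_heightC (hu : StrictAnti u) (hC : IsChain (· ≤ ·) C)
    (ha : a ∈ C) (hab : a ≤ b) : u b + heightC C b ≤ u a + heightC C a := by
  have hsplit := ncard_inter_add_ncard_sdiff_eq_ncard (C ∩ Iio b) (Iio a)
  have hlow : (C ∩ Iio b ∩ Iio a).ncard ≤ heightC C a :=
    ncard_le_ncard fun x hx => ⟨hx.1.1, hx.2⟩
  have hmid : ((C ∩ Iio b) \ Iio a).ncard ≤ (Ioc (u b) (u a)).ncard :=
    hu.ncard_le_of_isChain (hC.mono fun x hx => hx.1.1) (finite_Ioc _ _)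
      fun x hx => ⟨hu hx.1.2, hu.antitone (hC.le_of_not_gt hx.1.1 ha hx.2)⟩
  rw [ncard_Ioc_nat] at hmid
  have := hu.antitone hab
  rw [heightC_eq_ncard_inter_Iio C b]
  omega

lemma StrictAnti.ncard_le_add_heightC (hu : StrictAnti u) (hC : IsChain (· ≤ ·) C)
    (ha : a ∈ C) (hpos : ∀ x ∈ C, 0 < u x) : C.ncard ≤ u a + heightC C a := by
  have hup : (C \ Iio a).ncard ≤ (Ioc 0 (u a)).ncard :=
    hu.ncard_le_of_isChain (hC.mono sdiff_subset) (finite_Ioc _ _)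
      fun x hx => ⟨hpos x hx.1, hu.antitone (hC.le_of_not_gt hx.1 ha hx.2)⟩
  rw [ncard_Ioc_nat] at hup
  have := heightC_add_ncard_sdiff_Iio C a
  omega

lemma IsChain.ncard_le_sSup_add_one (hs : IsChain (· ≤ ·) s) (p : α → Prop)
    (hp : ∀ x ∈ s, p x) :
    s.ncard ≤ sSup {n | ∃ f : Fin (n + 1) → α, StrictMono f ∧ ∀ i, p (f i)} + 1 := by
  obtain hzero | ⟨n, hn⟩ : s.ncard = 0 ∨ ∃ n, s.ncard = n + 1 := by
    rcases s.ncard with _ | n <;> simp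
  · omega
  obtain ⟨f, hf, hfs⟩ := hs.exists_strictMono_fin (toFinite s) hn
  have hbdd : BddAbove {n | ∃ f : Fin (n + 1) → α, StrictMono f ∧ ∀ i, p (f i)} := by
    refine ⟨Nat.card α, fun k ⟨g, hg, _⟩ => ?_⟩
    have := Nat.card_le_card_of_injective g hg.injective
    simp only [Nat.card_eq_fintype_card, Fintype.card_fin] at this
    omega
  have := le_csSup hbdd ⟨f, hf, fun i => hp _ (hfs i)⟩
  omega

lemma IsChain.ncard_le_rankN_add_one (hs : IsChain (· ≤ ·) s) : s.ncard ≤ rankN α + 1 := by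
  simpa [rankN] using hs.ncard_le_sSup_add_one (fun _ => True) fun _ _ => trivial

lemma IsChain.ncard_le_heightN_add_one (hs : IsChain (· ≤ ·) s) (hx : ∀ y ∈ s, y ≤ a) :
    s.ncard ≤ heightN a + 1 :=
  hs.ncard_le_sSup_add_one (· ≤ a) hx

lemma IsChain.ncard_le_depthN_add_one (hs : IsChain (· ≤ ·) s) (hx : ∀ y ∈ s, a ≤ y) :
    s.ncard ≤ depthN a + 1 :=
  hs.ncard_le_sSup_add_one (a ≤ ·) hx

end Chain

section HatRank

variable {P : Type*} [PartialOrder P] [Finite P]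

lemma IsChain.heightC_add_one_le_heightN (hC : IsChain (· ≤ ·) C) {x : P} (hx : x ∈ C) :
    heightC C x + 1 ≤ heightN (toHat x) := by
  set s := insert ⊥ (toHat '' insert x (C ∩ Iio x))
  have hs : IsChain (· ≤ ·) s :=
    ((hC.mono (insert_subset hx inter_subset_left)).image_of_map_rel _ _ toHat
      fun _ _ => toHat_le_toHat_s11.2).insert fun _ _ _ => Or.inl bot_le
  have hsx : ∀ p ∈ s, p ≤ toHat x := by
    rintro _ (rfl | ⟨y, rfl | hy, rfl⟩)
    exacts [bot_le, le_rfl, toHat_le_toHat_s11.2 hy.2.le]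
  have hcard : s.ncard = heightC C x + 2 := by
    rw [ncard_insert_of_notMem (bot_notMem_image_toHat _),
      ncard_image_of_injective _ toHat_injective,
      ncard_insert_of_notMem (fun h => h.2.false), heightC_eq_ncard_inter_Iio]
  have := hs.ncard_le_heightN_add_one hsx
  omega

lemma IsChain.ncard_le_depthN_add_heightC (hC : IsChain (· ≤ ·) C) {y : P} (hy : y ∈ C) :
    C.ncard ≤ depthN (toHat y) + heightC C y := by
  set s := insert ⊤ (toHat '' (C \ Iio y))
  have hs : IsChain (· ≤ ·) s :=
    ((hC.mono sdiff_subset).image_of_map_rel _ _ toHat fun _ _ => toHat_le_toHat_s11.2).insert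
      fun _ _ _ => Or.inr le_top
  have hys : ∀ p ∈ s, toHat y ≤ p := by
    rintro _ (rfl | ⟨z, hz, rfl⟩)
    exacts [le_top, toHat_le_toHat_s11.2 (hC.le_of_not_gt hz.1 hy hz.2)]
  have hcard : s.ncard = (C \ Iio y).ncard + 1 := by
    rw [ncard_insert_of_notMem (top_notMem_image_toHat _),
      ncard_image_of_injective _ toHat_injective]
  have := hs.ncard_le_depthN_add_one hys
  have := heightC_add_ncard_sdiff_Iio C y
  omega

lemma rankN_hat_le : rankN (Hat P) ≤ rankN P + 2 := by
  refine csSup_le' ?_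
  rintro n ⟨f, hf⟩
  have hrange : IsChain (· ≤ ·) (range f) := hf.monotone.isChain_range
  set T := toHat ⁻¹' range f
  have hT : IsChain (· ≤ ·) T := fun x hx y hy _ =>
    (hrange.total hx hy).imp toHat_le_toHat_s11.1 toHat_le_toHat_s11.1
  have hsub : range f ⊆ insert ⊥ (insert ⊤ (toHat '' T)) := by
    intro p hp
    induction p using Hat.induction with
    | bot => exact mem_insert _ _
    | top => exact mem_insert_of_mem _ (mem_insert _ _)
    | coe z => exact mem_insert_of_mem _ (mem_insert_of_mem _ ⟨z, hp, rfl⟩)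
  have hcard : (range f).ncard = n + 1 := by
    rw [ncard_range_of_injective hf.injective, Nat.card_eq_fintype_card, Fintype.card_fin]
  have h1 := ncard_le_ncard hsub
  have h2 := ncard_insert_le (⊥ : Hat P) (insert ⊤ (toHat '' T))
  have h3 := ncard_insert_le (⊤ : Hat P) (toHat '' T)
  rw [ncard_image_of_injective T toHat_injective] at h3
  have h4 := hT.ncard_le_rankN_add_one
  omega

end HatRank

section MinimalT

variable {P : Type*} [PartialOrder P] {v : Hat P → ℕ}

lemma memT.strictAnti (hv : memT P v) : StrictAnti v := fun p q h => hv.2 p q h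

lemma memT.strictAnti_toHat (hv : memT P v) : StrictAnti fun x : P => v (toHat x) :=
  hv.strictAnti.comp_strictMono toHat_strictMono

lemma memT.pos_of_ne_top (hv : memT P v) {p : Hat P} (hp : p ≠ ⊤) : 0 < v p :=
  hv.1 ▸ hv.2 p ⊤ (lt_top_iff_ne_top.2 hp)

lemma memT.ncard_le_add_heightC [Finite P] (hv : memT P v) {C : Set P}
    (hC : IsChain (· ≤ ·) C) {a : P} (ha : a ∈ C) : C.ncard ≤ v (toHat a) + heightC C a :=
  hv.strictAnti_toHat.ncard_le_add_heightC hC ha fun x _ =>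
    hv.pos_of_ne_top (toHat_lt_top x).ne

lemma not_isMinT_of_isUpperSet (hv : memT P v) {S : Set (Hat P)} (hS : IsUpperSet S)
    (htop : ⊤ ∈ S) (hbot : ⊥ ∉ S) (hgap : ∀ p ∉ S, ∀ q ∈ S, p < q → v q + 2 ≤ v p) :
    ¬ IsMinT P v := by
  set w : Hat P → ℕ := fun p => if p ∈ S then v p else v p - 1
  have hpos : ∀ p ∉ S, 0 < v p := fun p hp => hv.pos_of_ne_top fun h => hp (h ▸ htop)
  have hwT : memT P w := by
    refine ⟨by simp [w, htop, hv.1], fun p q hpq => ?_⟩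
    have := hv.2 p q hpq
    by_cases hq : q ∈ S <;> by_cases hp : p ∈ S
    · simp [w, hp, hq, this]
    · have := hgap p hp q hq hpq
      simp only [w, hp, hq, if_true, if_false]
      omega
    · exact absurd (hS hpq.le hp) hq
    · have := hpos q hq
      simp only [w, hp, hq, if_false]
      omega
  have hTge : Tge P v w := by
    refine ⟨fun p => by by_cases hp : p ∈ S <;> simp [w, hp], fun p q hpq => ?_⟩
    by_cases hq : q ∈ S
    · simp [w, hq]
    · have hp : p ∉ S := fun hp => hq (hS hpq hp)
      have := hpos p hp
      have := hpos q hq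
      simp only [w, hp, hq, if_false]
      omega
  intro hmin
  have hw := congrFun (hmin.2 w hwT hTge) ⊥
  have := hpos ⊥ hbot
  simp only [w, hbot, if_false] at hw
  omega

end MinimalT

section TwoChains

variable {P : Type*} [PartialOrder P]

lemma IsCCD.isChain {d : ℕ} {C : Fin d → Set P} (hC : IsCCD C) (i : Fin d) :
    IsChain (· ≤ ·) (C i) :=
  (hC.1 i).1

variable {C : Fin 2 → Set P} {m : P} {v : Hat P → ℕ}

lemma IsCCD.mem_zero_or_mem_one (hC : IsCCD C) (z : P) : z ∈ C 0 ∨ z ∈ C 1 := by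
  obtain ⟨i, hi⟩ := mem_iUnion.1 (hC.2.2 ▸ mem_univ z)
  fin_cases i
  exacts [Or.inl hi, Or.inr hi]

lemma IsCCD.notMem_one_of_mem_zero (hC : IsCCD C) {z : P} (hz : z ∈ C 0) : z ∉ C 1 :=
  disjoint_left.1 (hC.2.1 0 1 (by decide)) hz

lemma IsCCD.exists_covBy [Finite P] (hC : IsCCD C) (hm : IsGreatest (C 0) m) {z : P}
    (hz : z ∈ C 1) (hzm : z ≤ m) : ∃ y ∈ C 1, ∃ x ∈ C 0, z ≤ y ∧ y ⋖ x := by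
  obtain ⟨y, hzy, hy⟩ := (toFinite (C 1 ∩ Iic m)).exists_le_maximal ⟨hz, hzm⟩
  have hy_ge : ∀ w ∈ C 1 ∩ Iic m, w ≤ y := fun w hw =>
    ((hC.isChain 1).total hw.1 hy.1.1).elim id (hy.2 hw)
  have hym : y < m := hy.1.2.lt_of_ne fun h => hC.notMem_one_of_mem_zero hm.1 (h ▸ hy.1.1)
  obtain ⟨x, hx⟩ := (toFinite (C 0 ∩ Ioi y)).exists_minimal ⟨m, hm.1, hym⟩
  have hx_le : ∀ w ∈ C 0 ∩ Ioi y, x ≤ w := fun w hw =>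
    ((hC.isChain 0).total hx.1.1 hw.1).elim id (hx.2 hw)
  refine ⟨y, hy.1.1, x, hx.1.1, hzy, hx.1.2, fun w hyw hwx => ?_⟩
  rcases hC.mem_zero_or_mem_one w with hw | hw
  · exact (hx_le w ⟨hw, hyw⟩).not_gt hwx
  · exact (hy_ge w ⟨hw, hwx.le.trans (hm.2 hx.1.1)⟩).not_gt hyw

def tightSet (C : Set P) (v : Hat P → ℕ) : Set (Hat P) :=
  insert ⊤ (toHat '' {y ∈ C | v (toHat y) + heightC C y = C.ncard})

lemma top_mem_tightSet (C : Set P) (v : Hat P → ℕ) : ⊤ ∈ tightSet C v := mem_insert _ _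

lemma bot_notMem_tightSet (C : Set P) (v : Hat P → ℕ) : ⊥ ∉ tightSet C v := by
  rintro (h | h)
  exacts [bot_ne_top h, bot_notMem_image_toHat _ h]

lemma toHat_mem_tightSet {C : Set P} {y : P} :
    toHat y ∈ tightSet C v ↔ y ∈ C ∧ v (toHat y) + heightC C y = C.ncard := by
  simp [tightSet, (toHat_lt_top y).ne, toHat_injective.eq_iff]

variable [Finite P]

lemma ncard_lt_add_heightC_of_le (hC : IsCCD C) (hrank : rankN P + 1 ≤ (C 0).ncard)
    (hcond : ∀ x y : P, y ⋖ x → heightN (toHat x) + depthN (toHat y) ≤ rankN (Hat P) + 1)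
    (hm : IsGreatest (C 0) m) (hv : memT P v) (hvm : 2 ≤ v (toHat m)) {z : P}
    (hz : z ∈ C 1) (hzm : z ≤ m) : (C 1).ncard < v (toHat z) + heightC (C 1) z := by
  obtain ⟨y, hy, x, hx, hzy, hyx⟩ := hC.exists_covBy hm hz hzm
  have hu := hv.strictAnti_toHat
  have hheight := (hC.isChain 0).heightC_add_one_le_heightN hx
  have hdepth := (hC.isChain 1).ncard_le_depthN_add_heightC hy
  have hxm := hu.add_heightC_le_add_heightC (hC.isChain 0) hx (hm.2 hx)
  have hzy' := hu.add_heightC_le_add_heightC (hC.isChain 1) hz hzy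
  have := hm.heightC_add_one
  have : v (toHat x) < v (toHat y) := hu hyx.lt
  have := hcond x y hyx
  have := rankN_hat_le (P := P)
  omega

lemma isUpperSet_tightSet (hC : IsCCD C) (hrank : rankN P + 1 ≤ (C 0).ncard)
    (hcond : ∀ x y : P, y ⋖ x → heightN (toHat x) + depthN (toHat y) ≤ rankN (Hat P) + 1)
    (hm : IsGreatest (C 0) m) (hv : memT P v) (hvm : 2 ≤ v (toHat m)) :
    IsUpperSet (tightSet (C 1) v) := by
  intro p q hpq hp
  rcases hp with rfl | ⟨y, ⟨hy, hvy⟩, rfl⟩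
  · exact top_le_iff.1 hpq ▸ top_mem_tightSet _ _
  induction q using Hat.induction with
  | bot => exact absurd hpq (bot_lt_toHat y).not_ge
  | top => exact top_mem_tightSet _ _
  | coe r =>
    have hyr := toHat_le_toHat_s11.1 hpq
    have hr : r ∈ C 1 := (hC.mem_zero_or_mem_one r).resolve_left fun hr =>
      (ncard_lt_add_heightC_of_le hC hrank hcond hm hv hvm hy (hyr.trans (hm.2 hr))).ne' hvy
    have := hv.strictAnti_toHat.add_heightC_le_add_heightC (hC.isChain 1) hy hyr
    have := hv.ncard_le_add_heightC (hC.isChain 1) hr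
    exact toHat_mem_tightSet.2 ⟨hr, by omega⟩

lemma add_two_le_of_notMem_tightSet (hreg : RegularPlanar P) (hC : IsCCD C)
    (hrank : rankN P + 1 ≤ (C 0).ncard) (hm : IsGreatest (C 0) m) (hv : memT P v)
    (hvm : 2 ≤ v (toHat m)) {p q : Hat P} (hp : p ∉ tightSet (C 1) v)
    (hq : q ∈ tightSet (C 1) v) (hpq : p < q) : v q + 2 ≤ v p := by
  have hu := hv.strictAnti_toHat
  have hk := hm.heightC_add_one
  have hlk : (C 1).ncard ≤ (C 0).ncard := (hC.isChain 1).ncard_le_rankN_add_one.trans hrank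
  have hC0 : ∀ z ∈ C 0, v (toHat m) + heightC (C 0) m ≤ v (toHat z) + heightC (C 0) z :=
    fun z hz => hu.add_heightC_le_add_heightC (hC.isChain 0) hz (hm.2 hz)
  have hC1 : ∀ z ∈ C 1, toHat z ∉ tightSet (C 1) v →
      (C 1).ncard < v (toHat z) + heightC (C 1) z := fun z hz hzS =>
    (hv.ncard_le_add_heightC (hC.isChain 1) hz).lt_of_ne fun h =>
      hzS (toHat_mem_tightSet.2 ⟨hz, h.symm⟩)
  rcases hq with rfl | ⟨y, ⟨hy, hvy⟩, rfl⟩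
  · rw [hv.1]
    induction p using Hat.induction with
    | bot => exact hvm.trans (hv.2 _ _ (bot_lt_toHat m)).le
    | top => exact absurd (top_mem_tightSet _ _) hp
    | coe z =>
      rcases hC.mem_zero_or_mem_one z with hz | hz
      · exact hvm.trans (hv.strictAnti.antitone (toHat_le_toHat_s11.2 (hm.2 hz)))
      · have := hC1 z hz hp
        have := heightC_lt_ncard hz
        omega
  induction p using Hat.induction with
  | bot =>
    have := hu.add_heightC_lt (hC.isChain 0) hm.1 fun x _ => hv.2 _ _ (bot_lt_toHat x)
    omega
  | top => exact absurd hpq not_top_lt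
  | coe z =>
    have hzy := toHat_lt_toHat.1 hpq
    rcases hC.mem_zero_or_mem_one z with hz | hz
    · have := hreg.2 C hC 0 1 z y hz hy hzy
      have := hC0 z hz
      omega
    · have := hC1 z hz hp
      have := heightC_lt_heightC hz hzy
      omega

end TwoChains

/-- Let `I(P)` be a regular planar lattice with canonical chain decomposition
`P = C₁ ∪ C₂` into two chains, where `ℓ(C₁) = rank P`. If
`height(x) + depth(y) ≤ rank (Hat P) + 1` for all `x` covering `y` in `P`, then
every minimal element `v` of `T(P)` satisfies `v(max C₁) = 1`. -/
theorem min_memT_value_at_top_of_first_chain (P : Type*) [Fintype P]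
    [PartialOrder P] (hreg : RegularPlanar P) (C : Fin 2 → Set P) (hC : IsCCD C)
    (hlen : (C 0).ncard - 1 = rankN P)
    (hcond : ∀ x y : P, y ⋖ x →
      heightN (toHat x) + depthN (toHat y) ≤ rankN (Hat P) + 1)
    (m : P) (hm : m ∈ C 0) (hmax : ∀ z ∈ C 0, z ≤ m) :
    ∀ v : Hat P → ℕ, IsMinT P v → v (toHat m) = 1 := by
  intro v hv
  have hgreatest : IsGreatest (C 0) m := ⟨hm, hmax⟩
  have hrank : rankN P + 1 ≤ (C 0).ncard := by
    have := (ncard_pos (toFinite _)).2 ⟨m, hm⟩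
    omega
  have hpos := hv.1.pos_of_ne_top (toHat_lt_top m).ne
  by_contra hne
  have hvm : 2 ≤ v (toHat m) := by omega
  exact not_isMinT_of_isUpperSet hv.1
    (isUpperSet_tightSet hC hrank hcond hgreatest hv.1 hvm)
    (top_mem_tightSet _ _) (bot_notMem_tightSet _ _)
    (fun p hp q hq hpq => add_two_le_of_notMem_tightSet hreg hC hrank hgreatest hv.1 hvm hp hq hpq)
    hv
end

section
/- Let K be a field, P a finite poset, and L = I(P) the distributive lattice of lower sets of P. Let \varphi be the K-algebra homomorphism from the polynomial ring K[x_\alpha : \alpha \in L] to the polynomial ring K[t, y_p : p \in P] defined by \varphi(x_\alpha) = t \prod_{p \in \alpha} y_p. Then the kernel of \varphi equals the ideal generated by the Hibi binomials x_\alpha x_\beta - x_{\alpha \cap \beta} x_{\alpha \cup \beta}, where \alpha, \beta range over incomparable pairs of elements of L. -/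
open Classical

open MvPolynomial in
/-- The monomial `t ∏_{p ∈ α} y_p` attached to a lower set `α` of `P`, inside the
polynomial ring `K[t, y_p : p ∈ P]` (the variable `none` plays the role of `t`). -/
noncomputable def hibiMonomial (K : Type*) [CommSemiring K] (P : Type*) [Fintype P]
    [PartialOrder P] (α : LowerSet P) : MvPolynomial (Option P) K :=
  X none * ∏ p : P, if p ∈ α then X (some p) else 1

/-!
The map `x_α ↦ t ∏_{p ∈ α} y_p` is a monomial map, so its kernel is spanned by the binomials
`x^d - x^e` whose images agree. Modulo the Hibi binomials every monomial can be straightened,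
replacing an incomparable pair `x_α x_β` by `x_{α ⊓ β} x_{α ⊔ β}`, until its factors form a chain;
this terminates because each step strictly increases `∑ |α|²`, which is at most `deg · |P|²`.
A chain of lower sets is determined by its image, so two monomials with equal image straighten to
the same chain monomial.
-/

namespace MvPolynomial

open Finsupp

variable {R σ τ : Type*} [CommRing R] (m : σ → τ →₀ ℕ)

theorem aeval_monomial_eq_monomial_linearCombination (d : σ →₀ ℕ) (c : R) :
    aeval (fun i => monomial (m i) (1 : R)) (monomial d c) =
      monomial (linearCombination ℕ m d) c := by
  simp only [aeval_monomial, monomial_pow, one_pow, linearCombination_apply,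
    monomial_finsupp_sum_index, algebraMap_eq]

/-- The `R`-linear map sending the monomial with exponent `u` to the class of a chosen preimage
of `u` is a left inverse of the monomial map modulo `I`. -/
theorem ker_aeval_monomial_le {I : Ideal (MvPolynomial σ R)}
    (hI : ∀ d e : σ →₀ ℕ, linearCombination ℕ m d = linearCombination ℕ m e →
      monomial d (1 : R) - monomial e 1 ∈ I) :
    RingHom.ker (aeval fun i => monomial (m i) (1 : R)) ≤ I := by
  let preimage : (τ →₀ ℕ) → σ →₀ ℕ := Function.invFun (linearCombination ℕ m)
  let ψ := (basisMonomials τ R).constr R fun u => Ideal.Quotient.mkₐ R I (monomial (preimage u) 1)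
  have hψ : ∀ f, ψ (aeval (fun i => monomial (m i) (1 : R)) f) = Ideal.Quotient.mkₐ R I f := by
    intro f
    induction f using induction_on' with
    | monomial d c =>
      have hpre : linearCombination ℕ m (preimage (linearCombination ℕ m d)) =
          linearCombination ℕ m d := Function.invFun_eq ⟨d, rfl⟩
      rw [aeval_monomial_eq_monomial_linearCombination, ← mul_one c, ← smul_eq_mul,
        ← smul_monomial, ← smul_monomial, map_smul, map_smul, show monomial (linearCombination ℕ m d) (1 : R) =
        basisMonomials τ R (linearCombination ℕ m d) from rfl, Module.Basis.constr_basis,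
        Ideal.Quotient.mkₐ_eq_mk, Ideal.Quotient.eq.2 (hI _ _ hpre)]
    | add p q hp hq => rw [map_add, map_add, hp, hq, map_add]
  intro f hf
  rw [RingHom.mem_ker] at hf
  rw [← Ideal.Quotient.eq_zero_iff_mem, ← Ideal.Quotient.mkₐ_eq_mk R, ← hψ, hf, map_zero]

end MvPolynomial

namespace Finsupp

theorem exists_eq_add_single_one {ι : Type*} {d : ι →₀ ℕ} {a : ι} (ha : a ∈ d.support) :
    ∃ d' : ι →₀ ℕ, d = d' + single a 1 :=
  ⟨d - single a 1, (tsub_add_cancel_of_le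
    (single_le_iff.2 (Nat.one_le_iff_ne_zero.2 (mem_support_iff.1 ha)))).symm⟩

end Finsupp

theorem Finset.exists_isGreatest_of_isChain {α : Type*} [Preorder α] {s : Finset α}
    (hs : s.Nonempty) (hc : IsChain (· ≤ ·) (s : Set α)) : ∃ m, IsGreatest (s : Set α) m := by
  obtain ⟨m, hm⟩ := s.exists_maximal hs
  refine ⟨m, hm.prop, fun a ha => ?_⟩
  rcases eq_or_ne a m with rfl | hne
  · exact le_rfl
  · exact (hc ha hm.prop hne).elim id (hm.2 ha)

theorem Set.ncard_sq_add_ncard_sq_lt {α : Type*} [Finite α] {s t : Set α} (hst : ¬s ⊆ t)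
    (hts : ¬t ⊆ s) : s.ncard ^ 2 + t.ncard ^ 2 < (s ∩ t).ncard ^ 2 + (s ∪ t).ncard ^ 2 := by
  have hsum := Set.ncard_inter_add_ncard_union s t
  have hs := Set.ncard_lt_ncard (Set.inter_ssubset_left_iff.2 hst)
  have ht := Set.ncard_lt_ncard (Set.inter_ssubset_right_iff.2 hts)
  nlinarith

open Finsupp

section Hibi

variable {P : Type*} [PartialOrder P]

noncomputable def hibiExponent [Finite P] (α : LowerSet P) : Option P →₀ ℕ :=
  equivFunOnFinite.symm fun x => x.elim 1 fun p => if p ∈ α then 1 else 0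

section Finite

variable [Finite P]

@[simp]
theorem hibiExponent_none (α : LowerSet P) : hibiExponent α none = 1 := rfl

@[simp]
theorem hibiExponent_some (α : LowerSet P) (p : P) :
    hibiExponent α (some p) = if p ∈ α then 1 else 0 := rfl

theorem hibiExponent_inf_add_sup (α β : LowerSet P) :
    hibiExponent (α ⊓ β) + hibiExponent (α ⊔ β) = hibiExponent α + hibiExponent β := by
  ext (_ | p)
  · rfl
  · by_cases hα : p ∈ α <;> by_cases hβ : p ∈ β <;> simp [hα, hβ]

theorem linearCombination_hibiExponent_none (d : LowerSet P →₀ ℕ) :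
    linearCombination ℕ hibiExponent d none = d.degree := by
  simp [linearCombination_apply, degree_apply, Finsupp.sum]

theorem linearCombination_hibiExponent_some_pos_iff (d : LowerSet P →₀ ℕ) (p : P) :
    0 < linearCombination ℕ hibiExponent d (some p) ↔ ∃ α ∈ d.support, p ∈ α := by
  simp only [linearCombination_apply, Finsupp.sum, Finset.sum_apply', Finsupp.smul_apply,
    hibiExponent_some, smul_eq_mul, Finset.sum_pos_iff, mul_ite, mul_one, mul_zero]
  exact exists_congr fun α => by by_cases hp : p ∈ α <;> simp [hp, Nat.pos_iff_ne_zero]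

theorem mem_iff_linearCombination_hibiExponent_pos {d : LowerSet P →₀ ℕ} {τ : LowerSet P}
    (hτ : IsGreatest (d.support : Set (LowerSet P)) τ) (p : P) :
    p ∈ τ ↔ 0 < linearCombination ℕ hibiExponent d (some p) := by
  rw [linearCombination_hibiExponent_some_pos_iff]
  exact ⟨fun hp => ⟨τ, hτ.1, hp⟩, fun ⟨α, hα, hp⟩ => hτ.2 hα hp⟩

/-- A chain `α₁ ≤ ⋯ ≤ αₙ` is recovered from `∑ hibiExponent αᵢ` by peeling off its top `αₙ`,
the set of `p` with positive exponent. -/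
theorem eq_of_isChain_of_linearCombination_hibiExponent_eq {d e : LowerSet P →₀ ℕ}
    (hd : IsChain (· ≤ ·) (d.support : Set (LowerSet P)))
    (he : IsChain (· ≤ ·) (e.support : Set (LowerSet P)))
    (h : linearCombination ℕ hibiExponent d = linearCombination ℕ hibiExponent e) : d = e := by
  have hdeg : d.degree = e.degree := by
    rw [← linearCombination_hibiExponent_none, h, linearCombination_hibiExponent_none]
  induction hn : d.degree generalizing d e with
  | zero => rw [(degree_eq_zero_iff d).1 hn, (degree_eq_zero_iff e).1 (hdeg ▸ hn)]
  | succ n ih =>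
    have nonempty_of_degree {f : LowerSet P →₀ ℕ} (hf : f.degree = n + 1) : f.support.Nonempty :=
      Finsupp.support_nonempty_iff.2 fun h0 => by simp [h0] at hf
    obtain ⟨τ, hτd⟩ := Finset.exists_isGreatest_of_isChain (nonempty_of_degree hn) hd
    obtain ⟨σ, hσe⟩ := Finset.exists_isGreatest_of_isChain (nonempty_of_degree (hdeg ▸ hn)) he
    obtain rfl : τ = σ := SetLike.ext fun p => by
      rw [mem_iff_linearCombination_hibiExponent_pos hτd, h,
        mem_iff_linearCombination_hibiExponent_pos hσe]
    obtain ⟨d', rfl⟩ := exists_eq_add_single_one hτd.1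
    obtain ⟨e', rfl⟩ := exists_eq_add_single_one hσe.1
    simp only [map_add, linearCombination_single, one_smul, degree_single, add_left_inj]
      at h hdeg hn
    rw [ih (hd.mono (support_mono le_self_add)) (he.mono (support_mono le_self_add)) h hdeg hn]

end Finite

open MvPolynomial in
theorem hibiMonomial_eq_monomial (K : Type*) [CommSemiring K] [Fintype P] (α : LowerSet P) :
    hibiMonomial K P α = monomial (hibiExponent α) 1 := by
  rw [monomial_eq, C_1, one_mul, Finsupp.prod_fintype _ _ fun _ => pow_zero _,
    Fintype.prod_option, hibiMonomial]
  simp [apply_ite]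

end Hibi

section Straightening

variable {K : Type*} [CommRing K] {P : Type*} [PartialOrder P]

open MvPolynomial

variable (K P) in
noncomputable def hibiIdeal : Ideal (MvPolynomial (LowerSet P) K) :=
  Ideal.span {f | ∃ α β : LowerSet P, ¬α ≤ β ∧ ¬β ≤ α ∧ f = X α * X β - X (α ⊓ β) * X (α ⊔ β)}

theorem monomial_add_single_add_single_sub_mem_hibiIdeal (d : LowerSet P →₀ ℕ)
    {α β : LowerSet P} (hαβ : ¬α ≤ β) (hβα : ¬β ≤ α) :
    monomial (d + single α 1 + single β 1) (1 : K) -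
      monomial (d + single (α ⊓ β) 1 + single (α ⊔ β) 1) 1 ∈ hibiIdeal K P := by
  simp only [monomial_add_single, pow_one, mul_assoc, ← mul_sub]
  exact Ideal.mul_mem_left _ _ (Ideal.subset_span ⟨α, β, hαβ, hβα, rfl⟩)

noncomputable def cardSqSum (d : LowerSet P →₀ ℕ) : ℕ :=
  linearCombination ℕ (fun α : LowerSet P => (α : Set P).ncard ^ 2) d

theorem cardSqSum_le [Finite P] (d : LowerSet P →₀ ℕ) :
    cardSqSum d ≤ d.degree * Nat.card P ^ 2 := by
  rw [cardSqSum, linearCombination_apply, degree_apply, Finset.sum_mul]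
  exact Finset.sum_le_sum fun α _ => Nat.mul_le_mul_left _ (pow_le_pow_left₀
    (Nat.zero_le _) (Set.ncard_le_card _) 2)

theorem cardSqSum_lt_cardSqSum_straighten [Finite P] (d : LowerSet P →₀ ℕ) {α β : LowerSet P}
    (hαβ : ¬α ≤ β) (hβα : ¬β ≤ α) :
    cardSqSum (d + single α 1 + single β 1) <
      cardSqSum (d + single (α ⊓ β) 1 + single (α ⊔ β) 1) := by
  have := Set.ncard_sq_add_ncard_sq_lt (s := (α : Set P)) (t := β) hαβ hβα
  simp only [cardSqSum, map_add, linearCombination_single, one_smul, LowerSet.coe_inf,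
    LowerSet.coe_sup] at this ⊢
  omega

theorem exists_isChain_monomial_sub_mem_hibiIdeal [Finite P] (d : LowerSet P →₀ ℕ) :
    ∃ s : LowerSet P →₀ ℕ, IsChain (· ≤ ·) (s.support : Set (LowerSet P)) ∧
      linearCombination ℕ hibiExponent s = linearCombination ℕ hibiExponent d ∧
      monomial d (1 : K) - monomial s 1 ∈ hibiIdeal K P := by
  induction hk : d.degree * Nat.card P ^ 2 - cardSqSum d using Nat.strong_induction_on
    generalizing d with
  | _ k ih =>
  by_cases hd : IsChain (· ≤ ·) (d.support : Set (LowerSet P))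
  · exact ⟨d, hd, rfl, by rw [sub_self]; exact zero_mem _⟩
  obtain ⟨β, hβ, α, hα, hne, hβα, hαβ⟩ :
      ∃ β ∈ d.support, ∃ α ∈ d.support, β ≠ α ∧ ¬β ≤ α ∧ ¬α ≤ β := by
    simpa [IsChain, Set.Pairwise] using hd
  obtain ⟨d₁, rfl⟩ := exists_eq_add_single_one hβ
  obtain ⟨d₀, rfl⟩ := exists_eq_add_single_one (show α ∈ d₁.support by
    simpa [Finsupp.single_apply, hne] using hα)
  set d' := d₀ + single (α ⊓ β) 1 + single (α ⊔ β) 1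
  have hdecrease : d'.degree * Nat.card P ^ 2 - cardSqSum d' < k := by
    have hlt := cardSqSum_lt_cardSqSum_straighten d₀ hαβ hβα
    have hle := cardSqSum_le d'
    simp only [d', map_add, degree_single] at hk hle ⊢
    omega
  obtain ⟨s, hs, hlc, hmem⟩ := ih _ hdecrease d' rfl
  refine ⟨s, hs, hlc.trans ?_, ?_⟩
  · simp only [d', map_add, linearCombination_single, one_smul, add_assoc,
      hibiExponent_inf_add_sup]
  · rw [← sub_add_sub_cancel _ (monomial d' 1)]
    exact add_mem (monomial_add_single_add_single_sub_mem_hibiIdeal d₀ hαβ hβα) hmem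

theorem monomial_sub_monomial_mem_hibiIdeal [Finite P] {d e : LowerSet P →₀ ℕ}
    (h : linearCombination ℕ hibiExponent d = linearCombination ℕ hibiExponent e) :
    monomial d (1 : K) - monomial e 1 ∈ hibiIdeal K P := by
  obtain ⟨s, hs, hsd, hds⟩ := exists_isChain_monomial_sub_mem_hibiIdeal (K := K) d
  obtain ⟨t, ht, hte, het⟩ := exists_isChain_monomial_sub_mem_hibiIdeal (K := K) e
  obtain rfl : s = t :=
    eq_of_isChain_of_linearCombination_hibiExponent_eq hs ht (hsd.trans (h.trans hte.symm))
  simpa using sub_mem hds het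

theorem hibiIdeal_le_ker [Fintype P] :
    hibiIdeal K P ≤ RingHom.ker (aeval (R := K) (hibiMonomial K P)) := by
  refine Ideal.span_le.2 ?_
  rintro _ ⟨α, β, -, -, rfl⟩
  simp only [SetLike.mem_coe, RingHom.mem_ker, map_sub, map_mul, aeval_X,
    hibiMonomial_eq_monomial, monomial_mul, hibiExponent_inf_add_sup, sub_self]

end Straightening

open MvPolynomial in
/-- **The Hibi ideal is the defining ideal of the Hibi ring.** The kernel of
the `K`-algebra map `K[x_α : α ∈ I(P)] → K[t, y_p : p ∈ P]`,
`x_α ↦ t ∏_{p ∈ α} y_p`, is generated by the Hibi binomials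
`x_α x_β - x_{α ⊓ β} x_{α ⊔ β}` for incomparable `α, β ∈ I(P)`. -/
theorem hibi_ideal_eq_ker (K : Type*) [Field K] (P : Type*) [Fintype P]
    [PartialOrder P] :
    RingHom.ker (aeval (R := K) (hibiMonomial K P)) =
      Ideal.span {f : MvPolynomial (LowerSet P) K |
        ∃ α β : LowerSet P, ¬ α ≤ β ∧ ¬ β ≤ α ∧
          f = X α * X β - X (α ⊓ β) * X (α ⊔ β)} := by
  refine le_antisymm ?_ hibiIdeal_le_ker
  rw [show hibiMonomial K P = fun α => monomial (hibiExponent α) 1 from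
    funext (hibiMonomial_eq_monomial K)]
  exact ker_aeval_monomial_le _ fun _ _ => monomial_sub_monomial_mem_hibiIdeal
end

section
/- Let K be a field (or any commutative integral domain), P a finite poset, and for each lower set \alpha of P let u_\alpha = t \prod_{p \in \alpha} y_p in the polynomial ring K[t, y_p : p \in P]. If \alpha_1 \subseteq \alpha_2 \subseteq ... \subseteq \alpha_k and \beta_1 \subseteq \beta_2 \subseteq ... \subseteq \beta_\ell are weakly increasing chains of lower sets of P such that u_{\alpha_1} u_{\alpha_2} \cdots u_{\alpha_k} = u_{\beta_1} u_{\beta_2} \cdots u_{\beta_\ell}, then k = \ell and \alpha_i = \beta_i for all i. (This is the key step showing that the standard monomials of the Hibi ring R[I(P)] are pairwise distinct, establishing axiom (ASL-1).) -/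
open Classical

/-!
The `t`-degree of `u_{α₁} ⋯ u_{α_k}` is `k`, and its `y_p`-degree is the number of
indices `i` with `p ∈ αᵢ`. Since the chain is increasing, `p ∈ αᵢ` holds exactly for the
last that many indices `i`, so the degrees of the product determine the chain.
-/

open MvPolynomial Finset

namespace Fin

theorem apply_iff_le_card_filter_of_monotone {k : ℕ} {q : Fin k → Prop} [DecidablePred q]
    (hq : Monotone q) (i : Fin k) : q i ↔ k - i ≤ #{j | q j} := by
  constructor
  · intro hi
    calc k - (i : ℕ) = #(Ici i) := (card_Ici i).symm
      _ ≤ #{j | q j} := card_le_card fun j hj => by simpa using hq (mem_Ici.mp hj) hi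
  · intro hcard
    by_contra hi
    have hsub : ({j | q j} : Finset (Fin k)) ⊆ Ioi i := fun j hj => by
      simp only [mem_filter, mem_univ, true_and] at hj
      exact mem_Ioi.mpr (lt_of_not_ge fun hji => hi (hq hji hj))
    have := (card_le_card hsub).trans_eq (card_Ioi i)
    omega

theorem eq_of_monotone_of_card_filter_eq {k : ℕ} {q r : Fin k → Prop} [DecidablePred q]
    [DecidablePred r] (hq : Monotone q) (hr : Monotone r) (h : #{j | q j} = #{j | r j}) :
    q = r :=
  funext fun i => propext <| by
    rw [apply_iff_le_card_filter_of_monotone hq, apply_iff_le_card_filter_of_monotone hr, h]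

end Fin

theorem MvPolynomial.ite_X_one_ne_zero {σ R : Type*} [CommSemiring R] [Nontrivial R] (c : Prop)
    [Decidable c] (i : σ) : (if c then X i else 1 : MvPolynomial σ R) ≠ 0 := by
  split_ifs
  exacts [X_ne_zero i, one_ne_zero]

section HibiMonomial

variable {K : Type*} [CommSemiring K] [NoZeroDivisors K] [Nontrivial K]
  {P : Type*} [Fintype P] [PartialOrder P]

theorem hibiMonomial_ne_zero (α : LowerSet P) : hibiMonomial K P α ≠ 0 :=
  mul_ne_zero (X_ne_zero _) <| prod_ne_zero_iff.mpr fun _ _ => ite_X_one_ne_zero _ _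

theorem degreeOf_hibiMonomial (n : Option P) (α : LowerSet P) :
    degreeOf n (hibiMonomial K P α) =
      degreeOf n (X none : MvPolynomial (Option P) K) +
        ∑ p : P, if p ∈ α then degreeOf n (X (some p) : MvPolynomial (Option P) K) else 0 := by
  have hne : ∀ p ∈ (univ : Finset P),
      (if p ∈ α then X (some p) else 1 : MvPolynomial (Option P) K) ≠ 0 := fun p _ =>
    ite_X_one_ne_zero _ _
  rw [hibiMonomial, degreeOf_mul_eq (X_ne_zero _) (prod_ne_zero_iff.mpr hne),
    degreeOf_prod_eq _ _ hne]
  congr 1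
  refine sum_congr rfl fun p _ => ?_
  split_ifs <;> simp [degreeOf_one]

theorem degreeOf_none_hibiMonomial (α : LowerSet P) :
    degreeOf none (hibiMonomial K P α) = 1 := by
  simp [degreeOf_hibiMonomial, degreeOf_X]

theorem degreeOf_some_hibiMonomial (p : P) (α : LowerSet P) :
    degreeOf (some p) (hibiMonomial K P α) = if p ∈ α then 1 else 0 := by
  rw [degreeOf_hibiMonomial, ← sum_filter]
  simp [degreeOf_X, sum_ite_eq]

theorem degreeOf_none_prod_hibiMonomial {ι : Type*} (s : Finset ι) (α : ι → LowerSet P) :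
    degreeOf none (∏ i ∈ s, hibiMonomial K P (α i)) = #s := by
  rw [degreeOf_prod_eq _ _ fun i _ => hibiMonomial_ne_zero (α i)]
  simp [degreeOf_none_hibiMonomial]

theorem degreeOf_some_prod_hibiMonomial {ι : Type*} (s : Finset ι) (α : ι → LowerSet P)
    (p : P) :
    degreeOf (some p) (∏ i ∈ s, hibiMonomial K P (α i)) = #{i ∈ s | p ∈ α i} := by
  rw [degreeOf_prod_eq _ _ fun i _ => hibiMonomial_ne_zero (α i)]
  simp [degreeOf_some_hibiMonomial]

end HibiMonomial

/-- **Standard monomials of the Hibi ring are pairwise distinct (ASL-1).**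
If `α₁ ⊆ … ⊆ α_k` and `β₁ ⊆ … ⊆ β_ℓ` are weakly increasing chains of lower sets
of `P` with `u_{α₁} ⋯ u_{α_k} = u_{β₁} ⋯ u_{β_ℓ}`, where
`u_α = t ∏_{p ∈ α} y_p`, then `k = ℓ` and `αᵢ = βᵢ` for all `i`. -/
theorem standard_monomials_distinct (K : Type*) [CommRing K] [IsDomain K]
    (P : Type*) [Fintype P] [PartialOrder P] (k l : ℕ)
    (α : Fin k → LowerSet P) (β : Fin l → LowerSet P)
    (hα : Monotone α) (hβ : Monotone β)
    (h : ∏ i, hibiMonomial K P (α i) = ∏ j, hibiMonomial K P (β j)) :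
    k = l ∧ ∀ (i : Fin k) (j : Fin l), (i : ℕ) = (j : ℕ) → α i = β j := by
  have hkl : k = l := by
    simpa [degreeOf_none_prod_hibiMonomial] using congrArg (degreeOf none) h
  subst hkl
  refine ⟨rfl, fun i j hij => ?_⟩
  obtain rfl : i = j := Fin.ext hij
  ext p
  have hcount : #{i | p ∈ α i} = #{i | p ∈ β i} := by
    simpa [degreeOf_some_prod_hibiMonomial] using congrArg (degreeOf (some p)) h
  have hmem := Fin.eq_of_monotone_of_card_filter_eq (fun _ _ hij hp => hα hij hp)
    (fun _ _ hij hp => hβ hij hp) hcount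
  exact (congrFun hmem i).to_iff
end

section
/- Let P be a finite poset with no element comparable to every other element of P (i.e. the distributive lattice I(P) is simple). Then |P| = rank P + 2 if and only if P is the direct sum of a chain and a single element, i.e. there exists q \in P incomparable to every other element of P such that P \setminus {q} is a chain. (This characterizes, via reg R[I(P)] = |P| - rank P - 1, the simple distributive lattices whose Hibi rings have a linear resolution.) -/
/-!
A longest chain of `P` has `rank P + 1` elements, so `|P| = rank P + 2` says that it misses exactly
one element `q`. If `q` were comparable to an element of the chain, it would lie below the top or
above the bottom of the chain, and that end of the chain would be comparable to everything, which
simplicity forbids. Conversely, if `q` is incomparable to everything else, a chain through `q` is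
`{q}`, so the longest chains are those of `P \ {q}`, which has `|P| - 1` elements.
-/

open Classical

open Finset

section Rank

variable {P : Type*} [Preorder P] [Fintype P]

lemma bddAbove_setOf_exists_strictMono :
    BddAbove {n : ℕ | ∃ f : Fin (n + 1) → P, StrictMono f} := by
  refine ⟨Fintype.card P, fun n ⟨f, hf⟩ => ?_⟩
  have := Fintype.card_le_of_injective f hf.injective
  rw [Fintype.card_fin] at this
  omega

lemma le_rankN_of_strictMono {n : ℕ} {f : Fin (n + 1) → P} (hf : StrictMono f) : n ≤ rankN P :=
  le_csSup bddAbove_setOf_exists_strictMono ⟨f, hf⟩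

lemma exists_strictMono_rankN [Nonempty P] : ∃ f : Fin (rankN P + 1) → P, StrictMono f := by
  have hne : {n : ℕ | ∃ f : Fin (n + 1) → P, StrictMono f}.Nonempty :=
    ⟨0, fun _ => Classical.arbitrary P, Subsingleton.strictMono (α := Fin 1) _⟩
  exact Nat.sSup_mem hne bddAbove_setOf_exists_strictMono

lemma rankN_add_one_le_of_forall_isChain [Nonempty P] {m : ℕ}
    (h : ∀ s : Finset P, IsChain (· ≤ ·) (s : Set P) → #s ≤ m) : rankN P + 1 ≤ m := by
  obtain ⟨f, hf⟩ := exists_strictMono_rankN (P := P)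
  calc rankN P + 1 = #(univ.image f) := by
        rw [card_image_of_injective _ hf.injective, card_univ, Fintype.card_fin]
    _ ≤ m := h _ (by simpa using hf.monotone.isChain_range)

end Rank

lemma IsChain.card_le_rankN_add_one {P : Type*} [PartialOrder P] [Fintype P] {s : Finset P}
    (hs : IsChain (· ≤ ·) (s : Set P)) : #s ≤ rankN P + 1 := by
  rcases Nat.eq_zero_or_pos #s with hzero | hpos
  · omega
  obtain ⟨n, hn⟩ := Nat.exists_eq_add_one_of_ne_zero hpos.ne'
  let := hs.linearOrder
  let e := monoEquivOfFin (s : Set P) ((Fintype.card_coe s).trans hn)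
  have := le_rankN_of_strictMono ((Subtype.strictMono_coe _).comp e.strictMono)
  omega

lemma Function.Injective.exists_forall_ne_mem_range {α β : Type*} [Fintype α] [Fintype β]
    {f : α → β} (hf : Function.Injective f) (hcard : Fintype.card β = Fintype.card α + 1) :
    ∃ q, ∀ p, p ≠ q → p ∈ Set.range f := by
  have hcompl : #(univ.image f)ᶜ = 1 := by
    rw [card_compl, card_image_of_injective _ hf, card_univ]
    omega
  obtain ⟨q, hq⟩ := card_eq_one.mp hcompl
  refine ⟨q, fun p hp => ?_⟩
  by_contra hpf
  have : p ∈ (univ.image f)ᶜ := by simpa using hpf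
  exact hp (by simpa [hq] using this)

lemma IsChain.subset_singleton_of_incomparable {P : Type*} [Preorder P] {s : Set P} {q : P}
    (hs : IsChain (· ≤ ·) s) (hqs : q ∈ s) (hq : ∀ p : P, p ≠ q → ¬(p ≤ q ∨ q ≤ p)) :
    s ⊆ {q} :=
  fun x hx => by_contra fun hxq => hq x hxq (hs.total hx hqs)

section Cover

variable {P : Type*} [Preorder P] {n : ℕ} {f : Fin (n + 1) → P} {q : P}

lemma le_last_of_forall_ne_mem_range (hf : Monotone f) (hcover : ∀ p, p ≠ q → p ∈ Set.range f)
    {i : Fin (n + 1)} (hqi : q ≤ f i) (x : P) : x ≤ f (Fin.last n) := by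
  by_cases hx : x = q
  · exact hx ▸ hqi.trans (hf (Fin.le_last i))
  · obtain ⟨j, rfl⟩ := hcover x hx
    exact hf (Fin.le_last j)

lemma zero_le_of_forall_ne_mem_range (hf : Monotone f) (hcover : ∀ p, p ≠ q → p ∈ Set.range f)
    {i : Fin (n + 1)} (hiq : f i ≤ q) (x : P) : f 0 ≤ x := by
  by_cases hx : x = q
  · exact hx ▸ (hf (Fin.zero_le i)).trans hiq
  · obtain ⟨j, rfl⟩ := hcover x hx
    exact hf (Fin.zero_le j)

end Cover

section Simple

variable {P : Type*} [PartialOrder P] [Fintype P]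

lemma exists_incomparable_of_card_eq_rankN_add_two
    (hsimple : ¬ ∃ p : P, ∀ q : P, q ≠ p → p ≤ q ∨ q ≤ p) (hcard : Fintype.card P = rankN P + 2) :
    ∃ q : P, (∀ p : P, p ≠ q → ¬(p ≤ q ∨ q ≤ p)) ∧ IsChain (· ≤ ·) {p : P | p ≠ q} := by
  have : Nonempty P := Fintype.card_pos_iff.mp (by omega)
  obtain ⟨f, hf⟩ := exists_strictMono_rankN (P := P)
  obtain ⟨q, hcover⟩ := hf.injective.exists_forall_ne_mem_range (by rw [Fintype.card_fin, hcard])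
  refine ⟨q, fun p hp hcomp => ?_, hf.monotone.isChain_range.mono hcover⟩
  obtain ⟨i, rfl⟩ := hcover p hp
  rcases hcomp with hiq | hqi
  · exact hsimple ⟨f 0, fun x _ =>
      Or.inl (zero_le_of_forall_ne_mem_range hf.monotone hcover hiq x)⟩
  · exact hsimple ⟨f (Fin.last _), fun x _ =>
      Or.inr (le_last_of_forall_ne_mem_range hf.monotone hcover hqi x)⟩

lemma card_eq_rankN_add_two_of_incomparable
    (hsimple : ¬ ∃ p : P, ∀ q : P, q ≠ p → p ≤ q ∨ q ≤ p) (q : P) (hq : ∀ p : P, p ≠ q → ¬(p ≤ q ∨ q ≤ p))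
    (hchain : IsChain (· ≤ ·) {p : P | p ≠ q}) : Fintype.card P = rankN P + 2 := by
  obtain ⟨p, hpq⟩ : ∃ p, p ≠ q := by
    by_contra! h
    exact hsimple ⟨q, fun p hp => absurd (h p) hp⟩
  have hcard : 1 < Fintype.card P := Fintype.one_lt_card_iff.mpr ⟨p, q, hpq⟩
  have hcard_erase : #(univ.erase q) = Fintype.card P - 1 := by
    rw [card_erase_of_mem (mem_univ q), card_univ]
  have hchain_le : ∀ s : Finset P, IsChain (· ≤ ·) (s : Set P) → #s ≤ Fintype.card P - 1 := by
    intro s hs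
    by_cases hqs : q ∈ s
    · have hsub := hs.subset_singleton_of_incomparable hqs hq
      have : #s ≤ 1 := card_le_one.mpr fun a ha b hb => (hsub ha).trans (hsub hb).symm
      omega
    · rw [← hcard_erase]
      exact card_le_card fun x hx => mem_erase.mpr ⟨ne_of_mem_of_not_mem hx hqs, mem_univ x⟩
  have : Nonempty P := ⟨q⟩
  have hlower := rankN_add_one_le_of_forall_isChain hchain_le
  have hupper : #(univ.erase q) ≤ rankN P + 1 :=
    (hchain.mono fun x hx => by simpa using hx).card_le_rankN_add_one
  omega

end Simple

/-- **Hibi rings with linear resolution (combinatorial form).** Let `P` be a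
finite poset with no element comparable to every other element (i.e. `I(P)` is
simple). Then `|P| = rank P + 2` if and only if `P` is the direct sum of a
chain and a single element: there is `q ∈ P` incomparable to every other
element such that `P \ {q}` is a chain. -/
theorem card_eq_rank_add_two_iff (P : Type*) [Fintype P] [PartialOrder P]
    (hsimple : ¬ ∃ p : P, ∀ q : P, q ≠ p → p ≤ q ∨ q ≤ p) :
    Fintype.card P = rankN P + 2 ↔
      ∃ q : P, (∀ p : P, p ≠ q → ¬(p ≤ q ∨ q ≤ p)) ∧
        IsChain (· ≤ ·) {p : P | p ≠ q} :=
  ⟨exists_incomparable_of_card_eq_rankN_add_two hsimple,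
    fun ⟨q, hq, hchain⟩ => card_eq_rankN_add_two_of_incomparable hsimple q hq hchain⟩
end
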